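/- Let $A$ be a normal abelian subgroup of a group $G$ and $g \in G$ a randomly power $k$-Engel element of $A\langle g \rangle$. Then the group $A\langle g \rangle$ is nilpotent of class at most $k+1$. -/

import Mathlib

/-!
For `a ∈ A` the randomly power Engel condition can be brought to the form `[a, h₁, …, h_k] = 1`
with every `hᵢ` generating `⟨g⟩`. Conjugating by `a` exchanges the two alternatives, and in the
second one, since `A` is abelian and `g₁, h₂` commute, `[g₁, h₂ᵃ] = [[a, h₂], g₁]`, while
conjugating by `a` does not change commutators with elements of `A`. An element of `A`
centralizes `hᵢ` iff it centralizes `g`, so peeling off the `hᵢ` one at a time gives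
`[a, g, …, g] = 1` with `k` copies of `g`.

Since `A⟨g⟩ / A` is cyclic, `γ₂(A⟨g⟩) ≤ A`, and for `x ∈ A` the commutator `[x, b gⁿ]`
(`b ∈ A`) equals `[x, gⁿ]`; hence each further term of the lower central series needs one copy
of `g` fewer to vanish, and `γ_{k+2}(A⟨g⟩) = 1`.
-/

open scoped commutatorElement

/-- Iterated commutator `[x, y, y, ..., y]` with `y` repeated `k` times (`engel x y 0 = x`). -/
def engel {G : Type*} [Group G] (x y : G) : ℕ → G
  | 0 => x
  | k + 1 => ⁅engel x y k, y⁆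

/-- Left-normed iterated commutator `[x, l₁, l₂, ..., lₙ]`. -/
def lcomm {G : Type*} [Group G] (x : G) (l : List G) : G :=
  l.foldl (fun u v => ⁅u, v⁆) x

/-- `x` is a left Engel element of `G`. -/
def IsLeftEngel (G : Type*) [Group G] (x : G) : Prop :=
  ∀ a : G, ∃ k : ℕ, 0 < k ∧ engel a x k = 1

open Subgroup

section Commutators

variable {G : Type*} [Group G]

theorem engel_succ (a g : G) (m : ℕ) : engel a g (m + 1) = ⁅engel a g m, g⁆ := rfl

theorem engel_one_left (g : G) (m : ℕ) : engel 1 g m = 1 := by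
  induction m with
  | zero => rfl
  | succ m ih => rw [engel_succ, ih, commutatorElement_one_left]

theorem lcomm_cons (x h : G) (t : List G) : lcomm x (h :: t) = lcomm ⁅x, h⁆ t := rfl

theorem map_lcomm {H : Type*} [Group H] (f : G →* H) (x : G) (l : List G) :
    f (lcomm x l) = lcomm (f x) (l.map f) := by
  induction l generalizing x with
  | nil => rfl
  | cons h t ih => rw [lcomm_cons, ih, map_commutatorElement]; rfl

theorem commutatorElement_eq_one_of_mem_zpowers {e u v : G} (h : ⁅e, u⁆ = 1)
    (hv : v ∈ zpowers u) : ⁅e, v⁆ = 1 := by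
  obtain ⟨n, rfl⟩ := mem_zpowers_iff.mp hv
  exact commutatorElement_eq_one_iff_commute.mpr
    ((commutatorElement_eq_one_iff_commute.mp h).zpow_right n)

theorem commutatorElement_mul_right_of_commute {x h : G} (a : G) (hxh : Commute x h) :
    ⁅x, a * h⁆ = ⁅x, a⁆ := by
  have : h * x⁻¹ * h⁻¹ = x⁻¹ := by rw [hxh.inv_left.symm.eq, mul_inv_cancel_right]
  calc ⁅x, a * h⁆ = x * a * (h * x⁻¹ * h⁻¹) * a⁻¹ := by group
    _ = ⁅x, a⁆ := by rw [this, commutatorElement_def]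

theorem top_lowerCentralSeries_eq_bot_iff (K : Subgroup G) (n : ℕ) :
    (⊤ : Subgroup K).lowerCentralSeries n = ⊥ ↔ K.lowerCentralSeries n = ⊥ := by
  rw [← map_eq_bot_iff_of_injective (H := (⊤ : Subgroup K).lowerCentralSeries n)
    (f := K.subtype) Subtype.val_injective, map_lowerCentralSeries, ← MonoidHom.range_eq_map,
    range_subtype]

end Commutators

section Normal

variable {G : Type*} [Group G] {A : Subgroup G} [A.Normal]

theorem commutatorElement_mem_of_mem_left {a : G} (ha : a ∈ A) (u : G) : ⁅a, u⁆ ∈ A :=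
  commutator_le_left A ⊤ (commutator_mem_commutator ha (mem_top u))

theorem engel_mem {a : G} (ha : a ∈ A) (g : G) (m : ℕ) : engel a g m ∈ A := by
  induction m with
  | zero => exact ha
  | succ m ih => exact commutatorElement_mem_of_mem_left ih g

theorem commutator_sup_zpowers_le (g : G) : ⁅A ⊔ zpowers g, A ⊔ zpowers g⁆ ≤ A := by
  have hmap : (A ⊔ zpowers g).map (QuotientGroup.mk' A) = zpowers (QuotientGroup.mk' A g) := by
    rw [Subgroup.map_sup, (Subgroup.map_eq_bot_iff _).mpr (QuotientGroup.ker_mk' A).ge, bot_sup_eq,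
      MonoidHom.map_zpowers]
  refine ((Subgroup.map_eq_bot_iff _).mp ?_).trans (QuotientGroup.ker_mk' A).le
  rw [map_commutator, hmap, commutator_eq_bot_iff_le_centralizer]
  exact le_centralizer _

end Normal

section AbelianNormal

variable {G : Type*} [Group G] {A : Subgroup G} [A.Normal] [IsMulCommutative A]

theorem commutatorElement_mul_left_of_mem {a b : G} (ha : a ∈ A) (hb : b ∈ A) (u : G) :
    ⁅a * b, u⁆ = ⁅a, u⁆ * ⁅b, u⁆ := by
  have hcomm : ⁅b, u⁆ * (u * a⁻¹ * u⁻¹) = u * a⁻¹ * u⁻¹ * ⁅b, u⁆ :=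
    setLike_mul_comm (commutatorElement_mem_of_mem_left hb u)
      (Subgroup.Normal.conj_mem ‹_› _ (A.inv_mem ha) u)
  calc ⁅a * b, u⁆ = a * (⁅b, u⁆ * (u * a⁻¹ * u⁻¹)) := by group
    _ = ⁅a, u⁆ * ⁅b, u⁆ := by rw [hcomm]; group

theorem commutatorElement_inv_left_of_mem {a : G} (ha : a ∈ A) (u : G) :
    ⁅a⁻¹, u⁆ = ⁅a, u⁆⁻¹ := by
  refine eq_inv_of_mul_eq_one_right ?_
  rw [← commutatorElement_mul_left_of_mem ha (A.inv_mem ha), mul_inv_cancel,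
    commutatorElement_one_left]

theorem commutatorElement_commutatorElement_comm {b c d : G} (hb : b ∈ A) (hcd : Commute c d) :
    ⁅⁅b, c⁆, d⁆ = ⁅⁅b, d⁆, c⁆ := by
  have expand : ∀ x y : G, ⁅⁅b, x⁆, y⁆ =
      b * ((x * b⁻¹ * x⁻¹) * ((y * x * b * (y * x)⁻¹) * (y * b⁻¹ * y⁻¹))) := fun x y => by group
  have hP := Subgroup.Normal.conj_mem ‹_› _ (A.inv_mem hb) c
  have hQ := Subgroup.Normal.conj_mem ‹_› _ hb (d * c)
  have hR := Subgroup.Normal.conj_mem ‹_› _ (A.inv_mem hb) d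
  rw [expand, expand, hcd.eq, setLike_mul_comm hP (A.mul_mem hQ hR), setLike_mul_comm hQ hR,
    mul_assoc]

theorem commutatorElement_mul_right_of_mem {x a : G} (hx : x ∈ A) (ha : a ∈ A) (h : G) :
    ⁅x, a * h⁆ = ⁅x, h⁆ := by
  have hxa : ⁅x, a⁆ = 1 := commutatorElement_eq_one_iff_mul_comm.mpr (setLike_mul_comm hx ha)
  calc ⁅x, a * h⁆ = ⁅x, a⁆ * (a * ⁅x, h⁆ * a⁻¹) := by group
    _ = ⁅x, h⁆ := by
      rw [hxa, one_mul, setLike_mul_comm ha (commutatorElement_mem_of_mem_left hx h),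
        mul_inv_cancel_right]

theorem engel_mul {a b : G} (ha : a ∈ A) (hb : b ∈ A) (g : G) (m : ℕ) :
    engel (a * b) g m = engel a g m * engel b g m := by
  induction m with
  | zero => rfl
  | succ m ih =>
    rw [engel_succ, ih, commutatorElement_mul_left_of_mem (engel_mem ha g m) (engel_mem hb g m)]
    rfl

theorem engel_inv {a : G} (ha : a ∈ A) (g : G) (m : ℕ) : engel a⁻¹ g m = (engel a g m)⁻¹ :=
  eq_inv_of_mul_eq_one_right <| by
    rw [← engel_mul ha (A.inv_mem ha), mul_inv_cancel, engel_one_left]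

theorem engel_commutatorElement {a u g : G} (ha : a ∈ A) (hug : Commute u g) (m : ℕ) :
    engel ⁅a, u⁆ g m = ⁅engel a g m, u⁆ := by
  induction m with
  | zero => rfl
  | succ m ih =>
    rw [engel_succ, ih, commutatorElement_commutatorElement_comm (engel_mem ha g m) hug]
    rfl

end AbelianNormal

section EngelSeries

variable {G : Type*} [Group G] (A : Subgroup G) [A.Normal] [IsMulCommutative A]

def engelKer (g : G) (m : ℕ) : Subgroup G where
  carrier := {a | a ∈ A ∧ engel a g m = 1}
  one_mem' := ⟨A.one_mem, engel_one_left g m⟩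
  mul_mem' := fun ⟨ha, ha'⟩ ⟨hb, hb'⟩ =>
    ⟨A.mul_mem ha hb, by rw [engel_mul ha hb, ha', hb', one_mul]⟩
  inv_mem' := fun ⟨ha, ha'⟩ => ⟨A.inv_mem ha, by rw [engel_inv ha, ha', inv_one]⟩

variable {A}

theorem engelKer_zero (g : G) : engelKer A g 0 = ⊥ :=
  eq_bot_iff.mpr fun _ ha => ha.2

theorem engelKer_mono (g : G) : Monotone (engelKer A g) :=
  monotone_nat_of_le_succ fun m _ ⟨ha, ha'⟩ =>
    ⟨ha, by rw [engel_succ, ha', commutatorElement_one_left]⟩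

theorem commutatorElement_mem_engelKer {g x y : G} {m : ℕ} (hx : x ∈ engelKer A g (m + 1))
    (hy : y ∈ A ⊔ zpowers g) : ⁅x, y⁆ ∈ engelKer A g m := by
  obtain ⟨hxA, hxg⟩ := hx
  obtain ⟨b, hb, _, ⟨n, rfl⟩, rfl⟩ := mem_sup_of_normal_left.mp hy
  rw [commutatorElement_mul_right_of_mem hxA hb]
  refine ⟨commutatorElement_mem_of_mem_left hxA _, ?_⟩
  rw [engel_commutatorElement hxA ((Commute.refl g).zpow_left n)]
  exact commutatorElement_eq_one_of_mem_zpowers hxg (zpow_mem_zpowers g n)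

theorem lowerCentralSeries_sup_zpowers_le_engelKer {g : G} {m : ℕ}
    (hengel : ∀ a ∈ A, engel a g m = 1) (n : ℕ) :
    (A ⊔ zpowers g).lowerCentralSeries (n + 1) ≤ engelKer A g (m - n) := by
  induction n with
  | zero =>
    intro x hx
    have hxA := commutator_sup_zpowers_le g hx
    exact ⟨hxA, hengel x hxA⟩
  | succ n ih =>
    refine commutator_le.mpr fun x hx y hy => commutatorElement_mem_engelKer ?_ hy
    exact engelKer_mono g (by omega) (ih hx)

theorem lowerCentralSeries_sup_zpowers_eq_bot {g : G} {m : ℕ}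
    (hengel : ∀ a ∈ A, engel a g m = 1) : (A ⊔ zpowers g).lowerCentralSeries (m + 1) = ⊥ := by
  simpa [engelKer_zero] using lowerCentralSeries_sup_zpowers_le_engelKer hengel m

end EngelSeries

section RandomlyPowerEngel

variable {G : Type*} [Group G]

def RandomlyPowerEngelAt (g : G) (k : ℕ) (x : G) : Prop :=
  ∃ (g₁ : G) (gs : List G), (g₁ :: gs).length = k ∧
    (∀ gi ∈ g₁ :: gs, zpowers gi = zpowers g) ∧
    (lcomm (x⁻¹ * g₁ * x) gs = 1 ∨ lcomm g₁ (gs.map fun gi => x⁻¹ * gi * x) = 1)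

variable {A : Subgroup G} [A.Normal] [IsMulCommutative A]

theorem engel_length_eq_one_of_lcomm_eq_one {g d : G} {l : List G} (hd : d ∈ A)
    (hl : ∀ h ∈ l, g ∈ zpowers h) (h1 : lcomm d l = 1) : engel d g l.length = 1 := by
  induction l generalizing d with
  | nil => exact h1
  | cons h t ih =>
    have hgh : g ∈ zpowers h := hl h List.mem_cons_self
    have ht := ih (commutatorElement_mem_of_mem_left hd h)
      (fun y hy => hl y (List.mem_cons_of_mem h hy)) h1
    have hhg : Commute h g := by
      obtain ⟨n, rfl⟩ := mem_zpowers_iff.mp hgh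
      exact Commute.self_zpow h n
    rw [engel_commutatorElement hd hhg] at ht
    exact commutatorElement_eq_one_of_mem_zpowers ht hgh

theorem commutatorElement_conj_of_commute {g₁ h b : G} (hb : b ∈ A) (hg₁h : Commute g₁ h) :
    ⁅g₁, b⁻¹ * h * b⁆ = ⁅⁅b, h⁆, g₁⁆ := by
  rw [show b⁻¹ * h * b = ⁅b⁻¹, h⁆ * h by group, commutatorElement_mul_right_of_commute _ hg₁h,
    ← commutatorElement_inv, commutatorElement_inv_left_of_mem hb,
    commutatorElement_inv_left_of_mem (commutatorElement_mem_of_mem_left hb h), inv_inv]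

theorem lcomm_map_conj_of_mem {d b : G} (hd : d ∈ A) (hb : b ∈ A) (l : List G) :
    lcomm d (l.map fun h => b⁻¹ * h * b) = lcomm d l := by
  induction l generalizing d with
  | nil => rfl
  | cons h t ih =>
    rw [List.map_cons, lcomm_cons, lcomm_cons, show b⁻¹ * h * b = ⁅b⁻¹, h⁆ * h by group,
      commutatorElement_mul_right_of_mem hd (commutatorElement_mem_of_mem_left (A.inv_mem hb) h),
      ih (commutatorElement_mem_of_mem_left hd h)]

theorem lcomm_cons_map_conj {g₁ h b : G} (hb : b ∈ A) (hg₁h : Commute g₁ h) (t : List G) :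
    lcomm g₁ ((h :: t).map fun x => b⁻¹ * x * b) = lcomm b (h :: g₁ :: t) := by
  rw [List.map_cons, lcomm_cons, commutatorElement_conj_of_commute hb hg₁h,
    lcomm_map_conj_of_mem (commutatorElement_mem_of_mem_left
      (commutatorElement_mem_of_mem_left hb h) g₁) hb]
  rfl

theorem engel_eq_one_of_lcomm_map_conj_eq_one {g g₁ b : G} {gs : List G} (hb : b ∈ A)
    (hgen : ∀ x ∈ g₁ :: gs, zpowers x = zpowers g)
    (h1 : lcomm g₁ (gs.map fun x => b⁻¹ * x * b) = 1) : engel b g (g₁ :: gs).length = 1 := by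
  obtain ⟨l, hperm, hl⟩ : ∃ l : List G, l.Perm (g₁ :: gs) ∧ lcomm b l = 1 := by
    cases gs with
    | nil =>
      refine ⟨[g₁], .refl _, ?_⟩
      rw [lcomm_cons, show g₁ = 1 from h1, commutatorElement_one_right]
      rfl
    | cons h t =>
      have hmem : ∀ x ∈ g₁ :: h :: t, x ∈ zpowers g := fun x hx =>
        hgen x hx ▸ mem_zpowers x
      have hg₁h : Commute g₁ h := by
        obtain ⟨i, hi⟩ := mem_zpowers_iff.mp (hmem g₁ (by simp))
        obtain ⟨j, hj⟩ := mem_zpowers_iff.mp (hmem h (by simp))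
        exact hi ▸ hj ▸ Commute.zpow_zpow_self g i j
      exact ⟨h :: g₁ :: t, .swap _ _ _, (lcomm_cons_map_conj hb hg₁h t).symm.trans h1⟩
  rw [← hperm.length_eq]
  exact engel_length_eq_one_of_lcomm_eq_one hb
    (fun x hx => hgen x (hperm.subset hx) ▸ mem_zpowers g) hl

theorem engel_eq_one_of_randomlyPowerEngelAt {g a : G} {k : ℕ} (ha : a ∈ A)
    (hrand : RandomlyPowerEngelAt g k a) : engel a g k = 1 := by
  obtain ⟨g₁, gs, rfl, hgen, h1 | h1⟩ := hrand
  · have h1' : lcomm g₁ (gs.map fun x => a⁻¹⁻¹ * x * a⁻¹) = 1 := by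
      have := map_lcomm (MulAut.conj a).toMonoidHom (a⁻¹ * g₁ * a) gs
      rw [h1, map_one, MulEquiv.coe_toMonoidHom, MulAut.conj_apply,
        show a * (a⁻¹ * g₁ * a) * a⁻¹ = g₁ by group] at this
      rw [inv_inv]
      exact this.symm
    rw [← inv_eq_one, ← engel_inv ha]
    exact engel_eq_one_of_lcomm_map_conj_eq_one (A.inv_mem ha) hgen h1'
  · exact engel_eq_one_of_lcomm_map_conj_eq_one ha hgen h1

end RandomlyPowerEngel

theorem stmt_5_general {G : Type*} [Group G] (A : Subgroup G) (hA : A.Normal)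
    (hab : ∀ u ∈ A, ∀ v ∈ A, u * v = v * u)
    (g : G) (k : ℕ)
    (hrand : ∀ x ∈ A ⊔ Subgroup.zpowers g, ∃ (g₁ : G) (gs : List G),
      (g₁ :: gs).length = k ∧
      (∀ gi ∈ g₁ :: gs, Subgroup.zpowers gi = Subgroup.zpowers g) ∧
      (lcomm (x⁻¹ * g₁ * x) gs = 1 ∨
        lcomm g₁ (gs.map (fun gi => x⁻¹ * gi * x)) = 1)) :
    (⊤ : Subgroup ↥(A ⊔ Subgroup.zpowers g)).lowerCentralSeries (k + 1) = ⊥ := by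
  have : IsMulCommutative A := .of_setLike_mul_comm hab
  have hengel : ∀ a ∈ A, engel a g k = 1 := fun a ha =>
    engel_eq_one_of_randomlyPowerEngelAt ha (hrand a (mem_sup_left ha))
  rw [top_lowerCentralSeries_eq_bot_iff]
  exact lowerCentralSeries_sup_zpowers_eq_bot hengel

theorem stmt_5 {G : Type*} [Group G] (A : Subgroup G) (hA : A.Normal)
    (hab : ∀ u ∈ A, ∀ v ∈ A, u * v = v * u)
    (g : G) (k : ℕ) (hk : 0 < k)
    (hrand : ∀ x ∈ A ⊔ Subgroup.zpowers g, ∃ (g₁ : G) (gs : List G),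
      (g₁ :: gs).length = k ∧
      (∀ gi ∈ g₁ :: gs, Subgroup.zpowers gi = Subgroup.zpowers g) ∧
      (lcomm (x⁻¹ * g₁ * x) gs = 1 ∨
        lcomm g₁ (gs.map (fun gi => x⁻¹ * gi * x)) = 1)) :
    (⊤ : Subgroup ↥(A ⊔ Subgroup.zpowers g)).lowerCentralSeries (k + 1) = ⊥ :=
  stmt_5_general A hA hab g k hrand
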